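/- arXiv:1703.05244 — 6 statements merged into one kernel-verified Lean document; each statement's English description precedes it below -/
import Mathlib

section
/- Let H be a finite-dimensional complex Hilbert space, A a Hermitian operator on H, and P = x⊗x a rank-one projection for a unit vector x. Then lim_{t→+∞} tr(exp(A + t(P − I))) = exp(⟨Ax, x⟩). -/
open Matrix Filter
open scoped ComplexOrder

/-- Functional calculus for Hermitian matrices: apply `f` to the eigenvalues. -/
noncomputable def mfun {d : ℕ} (f : ℝ → ℝ) (A : Matrix (Fin d) (Fin d) ℂ) :
    Matrix (Fin d) (Fin d) ℂ :=
  if hA : A.IsHermitian then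
    (hA.eigenvectorUnitary : Matrix (Fin d) (Fin d) ℂ) *
      Matrix.diagonal (fun i => (f (hA.eigenvalues i) : ℂ)) *
      star (hA.eigenvectorUnitary : Matrix (Fin d) (Fin d) ℂ)
  else 0

noncomputable def mexp {d : ℕ} (A : Matrix (Fin d) (Fin d) ℂ) : Matrix (Fin d) (Fin d) ℂ :=
  mfun Real.exp A

noncomputable def mlog {d : ℕ} (A : Matrix (Fin d) (Fin d) ℂ) : Matrix (Fin d) (Fin d) ℂ :=
  mfun Real.log A

/-- The Löwner order: `A ≤ B` iff `B - A` is positive semidefinite. -/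
def loewnerLE {d : ℕ} (A B : Matrix (Fin d) (Fin d) ℂ) : Prop :=
  (B - A).PosSemidef

/-- The quadratic form ⟨Ax, x⟩. -/
noncomputable def qf {d : ℕ} (A : Matrix (Fin d) (Fin d) ℂ) (x : Fin d → ℂ) : ℂ :=
  star x ⬝ᵥ A.mulVec x

/-- The rank-one projection x ⊗ x. -/
noncomputable def rankOneProj {d : ℕ} (x : Fin d → ℂ) : Matrix (Fin d) (Fin d) ℂ :=
  Matrix.vecMulVec x (star x)

/-! Let `μᵢ` and `vᵢ` be the eigenvalues and orthonormal eigenvectors of `M = A + t (P - I)`, and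
`pᵢ = |⟨x, vᵢ⟩|²`, so that `∑ pᵢ = 1`. Since `(P - I) x = 0`, `⟨Ax, x⟩ = ⟨Mx, x⟩ = ∑ pᵢ μᵢ`, and
Jensen's inequality gives `exp ⟨Ax, x⟩ ≤ ∑ exp μᵢ`. Conversely `μᵢ = ⟨A vᵢ, vᵢ⟩ - t (1 - pᵢ)`, and
`vᵢ` lies within `√(1 - pᵢ)` of its projection onto `x`, so
`μᵢ ≤ ⟨Ax, x⟩ + 3‖A‖ √(1 - pᵢ) - t (1 - pᵢ) ≤ ⟨Ax, x⟩ + 9‖A‖² / (2t) - t (1 - pᵢ) / 2`.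
Convexity of `exp` turns this into `∑ exp μᵢ ≤ exp (⟨Ax, x⟩ + 9‖A‖² / (2t)) (1 + (d - 1) e^{-t/2})`,
and the two bounds squeeze the trace. -/

open InnerProductSpace
open scoped Topology

theorem exp_le_of_le_add_mul_sqrt_sub {c K t p μ : ℝ} (ht : 0 < t) (hp0 : 0 ≤ p) (hp1 : p ≤ 1)
    (hμ : μ ≤ c + K * √(1 - p) - t * (1 - p)) :
    Real.exp μ ≤ Real.exp (c + K ^ 2 / (2 * t)) * (p + (1 - p) * Real.exp (-(t / 2))) := by
  set s := 1 - p
  have hs : 0 ≤ s := by linarith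
  have hamgm : K * √s ≤ K ^ 2 / (2 * t) + t / 2 * s := by
    calc K * √s ≤ K ^ 2 / (2 * t) + t / 2 * √s ^ 2 := by
          rw [div_add' _ _ _ (by positivity), le_div_iff₀ (by positivity)]
          nlinarith [sq_nonneg (K - t * √s)]
      _ = K ^ 2 / (2 * t) + t / 2 * s := by rw [Real.sq_sqrt hs]
  have hconvex : Real.exp (s * -(t / 2)) ≤ p + s * Real.exp (-(t / 2)) := by
    simpa using convexOn_exp.2 (Set.mem_univ 0) (Set.mem_univ (-(t / 2))) hp0 hs (by ring)
  calc Real.exp μ ≤ Real.exp (c + K ^ 2 / (2 * t) + s * -(t / 2)) := by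
        gcongr; linarith
    _ ≤ Real.exp (c + K ^ 2 / (2 * t)) * (p + s * Real.exp (-(t / 2))) := by
        rw [Real.exp_add]; gcongr

section InnerProductSpace

variable {𝕜 E ι : Type*} [RCLike 𝕜] [NormedAddCommGroup E] [InnerProductSpace 𝕜 E] [Fintype ι]

theorem norm_inner_map_self_sub_le (T : E →L[𝕜] E) (u v : E) :
    ‖⟪v, T v⟫_𝕜 - ⟪u, T u⟫_𝕜‖ ≤ ‖T‖ * (‖u‖ + ‖v‖) * ‖v - u‖ := by
  have h : ⟪v, T v⟫_𝕜 - ⟪u, T u⟫_𝕜 = ⟪v - u, T v⟫_𝕜 + ⟪u, T (v - u)⟫_𝕜 := by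
    simp only [inner_sub_left, map_sub, inner_sub_right]; ring
  calc ‖⟪v, T v⟫_𝕜 - ⟪u, T u⟫_𝕜‖ ≤ ‖v - u‖ * ‖T v‖ + ‖u‖ * ‖T (v - u)‖ := by
        rw [h]
        exact (norm_add_le _ _).trans (add_le_add (norm_inner_le_norm _ _) (norm_inner_le_norm _ _))
    _ ≤ ‖v - u‖ * (‖T‖ * ‖v‖) + ‖u‖ * (‖T‖ * ‖v - u‖) := by
        gcongr <;> exact T.le_opNorm _
    _ = ‖T‖ * (‖u‖ + ‖v‖) * ‖v - u‖ := by ring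

theorem norm_sub_inner_smul_sq {x : E} (hx : ‖x‖ = 1) (v : E) :
    ‖v - ⟪x, v⟫_𝕜 • x‖ ^ 2 = ‖v‖ ^ 2 - ‖⟪x, v⟫_𝕜‖ ^ 2 := by
  have h : ⟪v, ⟪x, v⟫_𝕜 • x⟫_𝕜 = (‖⟪x, v⟫_𝕜‖ ^ 2 : ℝ) := by
    rw [inner_smul_right, ← inner_conj_symm v x, RCLike.mul_conj]; push_cast; rfl
  rw [@norm_sub_sq 𝕜, h, RCLike.ofReal_re, norm_smul, hx]
  ring

theorem re_inner_map_self_le {x v : E} (hx : ‖x‖ = 1) (hv : ‖v‖ = 1) (T : E →L[𝕜] E) :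
    RCLike.re ⟪v, T v⟫_𝕜 ≤ RCLike.re ⟪x, T x⟫_𝕜 + 3 * ‖T‖ * √(1 - ‖⟪x, v⟫_𝕜‖ ^ 2) := by
  set α := ⟪x, v⟫_𝕜
  set s := 1 - ‖α‖ ^ 2
  set c := RCLike.re ⟪x, T x⟫_𝕜
  have hα : ‖α‖ ≤ 1 := by simpa [hx, hv] using norm_inner_le_norm (𝕜 := 𝕜) x v
  have hs0 : 0 ≤ s := by nlinarith [norm_nonneg α]
  have hs1 : s ≤ 1 := by nlinarith [norm_nonneg α]
  have hs : s ≤ √s := Real.le_sqrt_of_sq_le (by nlinarith)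
  have hdist : ‖v - α • x‖ = √s := by
    rw [← Real.sqrt_sq (norm_nonneg _), norm_sub_inner_smul_sq hx, hv, one_pow]
  have hαx : RCLike.re ⟪α • x, T (α • x)⟫_𝕜 = (1 - s) * c := by
    rw [map_smul, inner_smul_left, inner_smul_right, ← mul_assoc, RCLike.conj_mul]
    simp only [s, sub_sub_cancel]
    exact_mod_cast RCLike.re_ofReal_mul _ _
  have hc : -c ≤ ‖T‖ := by
    calc -c ≤ ‖⟪x, T x⟫_𝕜‖ := (neg_le_abs c).trans (RCLike.abs_re_le_norm _)
      _ ≤ ‖x‖ * ‖T x‖ := norm_inner_le_norm _ _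
      _ ≤ ‖T‖ := by simpa [hx] using T.le_opNorm x
  have hdiff : RCLike.re ⟪v, T v⟫_𝕜 - RCLike.re ⟪α • x, T (α • x)⟫_𝕜 ≤ ‖T‖ * 2 * √s := by
    calc _ = RCLike.re (⟪v, T v⟫_𝕜 - ⟪α • x, T (α • x)⟫_𝕜) := (map_sub _ _ _).symm
      _ ≤ ‖⟪v, T v⟫_𝕜 - ⟪α • x, T (α • x)⟫_𝕜‖ := RCLike.re_le_norm _
      _ ≤ ‖T‖ * (‖α • x‖ + ‖v‖) * ‖v - α • x‖ := norm_inner_map_self_sub_le T _ _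
      _ ≤ ‖T‖ * 2 * √s := by
        rw [hdist, norm_smul, hx, hv]; gcongr; linarith
  nlinarith [norm_nonneg T, mul_le_mul_of_nonneg_left hc hs0, Real.sqrt_nonneg s]

theorem re_inner_map_self_eq_sum (b : OrthonormalBasis ι 𝕜 E) {μ : ι → ℝ} {T : E →L[𝕜] E}
    (hT : ∀ i, T (b i) = (μ i : 𝕜) • b i) (x : E) :
    RCLike.re ⟪x, T x⟫_𝕜 = ∑ i, μ i * ‖⟪b i, x⟫_𝕜‖ ^ 2 := by
  have hTx : T x = ∑ i, (⟪b i, x⟫_𝕜 * μ i) • b i := by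
    conv_lhs => rw [← b.sum_repr' x]
    simp only [map_sum, map_smul, hT, smul_smul]
  rw [hTx, inner_sum, map_sum]
  refine Finset.sum_congr rfl fun i _ => ?_
  rw [inner_smul_right, ← inner_conj_symm x (b i), mul_right_comm, RCLike.mul_conj, mul_comm]
  norm_cast

theorem exp_re_inner_map_self_le_sum_exp (b : OrthonormalBasis ι 𝕜 E) {μ : ι → ℝ}
    {T : E →L[𝕜] E} (hT : ∀ i, T (b i) = (μ i : 𝕜) • b i) {x : E} (hx : ‖x‖ = 1) :
    Real.exp (RCLike.re ⟪x, T x⟫_𝕜) ≤ ∑ i, Real.exp (μ i) := by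
  have hw : ∑ i, ‖⟪b i, x⟫_𝕜‖ ^ 2 = 1 := by rw [b.sum_sq_norm_inner_right, hx, one_pow]
  calc Real.exp (RCLike.re ⟪x, T x⟫_𝕜)
      = Real.exp (∑ i, ‖⟪b i, x⟫_𝕜‖ ^ 2 • μ i) := by
        rw [re_inner_map_self_eq_sum b hT]; simp only [smul_eq_mul, mul_comm]
    _ ≤ ∑ i, ‖⟪b i, x⟫_𝕜‖ ^ 2 • Real.exp (μ i) :=
        convexOn_exp.map_sum_le (fun i _ => by positivity) hw (fun i _ => Set.mem_univ _)
    _ ≤ ∑ i, Real.exp (μ i) := by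
        gcongr with i
        refine mul_le_of_le_one_left (Real.exp_pos _).le (pow_le_one₀ (norm_nonneg _) ?_)
        simpa [hx] using norm_inner_le_norm (𝕜 := 𝕜) (b i) x

theorem re_inner_add_smul_rankOne_sub_one (T : E →L[𝕜] E) (x : E) (t : ℝ) (v : E) :
    RCLike.re ⟪v, (T + (t : 𝕜) • (rankOne 𝕜 x x - 1)) v⟫_𝕜 =
      RCLike.re ⟪v, T v⟫_𝕜 - t * (‖v‖ ^ 2 - ‖⟪x, v⟫_𝕜‖ ^ 2) := by
  have h : ⟪v, (rankOne 𝕜 x x - 1) v⟫_𝕜 = ((‖⟪x, v⟫_𝕜‖ ^ 2 - ‖v‖ ^ 2 : ℝ) : 𝕜) := by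
    rw [_root_.sub_apply, rankOne_apply, one_apply_eq_self, inner_sub_right, inner_smul_right,
      ← inner_conj_symm v x, RCLike.mul_conj, inner_self_eq_norm_sq_to_K]
    push_cast; rfl
  rw [_root_.add_apply, _root_.smul_apply, inner_add_right, inner_smul_right, h, map_add,
    ← RCLike.ofReal_mul, RCLike.ofReal_re]
  ring

theorem eigenvalue_le_re_inner_add_sqrt_sub (T : E →L[𝕜] E) {x : E} (hx : ‖x‖ = 1) {t : ℝ}
    (b : OrthonormalBasis ι 𝕜 E) {μ : ι → ℝ}
    (hb : ∀ i, (T + (t : 𝕜) • (rankOne 𝕜 x x - 1)) (b i) = (μ i : 𝕜) • b i) (i : ι) :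
    μ i ≤ RCLike.re ⟪x, T x⟫_𝕜 + 3 * ‖T‖ * √(1 - ‖⟪x, b i⟫_𝕜‖ ^ 2) -
      t * (1 - ‖⟪x, b i⟫_𝕜‖ ^ 2) := by
  have hμ : μ i = RCLike.re ⟪b i, (T + (t : 𝕜) • (rankOne 𝕜 x x - 1)) (b i)⟫_𝕜 := by
    rw [hb, inner_smul_right, inner_self_eq_norm_sq_to_K, b.norm_eq_one]
    simp
  rw [hμ, re_inner_add_smul_rankOne_sub_one, b.norm_eq_one, one_pow]
  linarith [re_inner_map_self_le hx (b.norm_eq_one i) T]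

theorem sum_exp_eigenvalues_le (T : E →L[𝕜] E) {x : E} (hx : ‖x‖ = 1) {t : ℝ} (ht : 0 < t)
    (b : OrthonormalBasis ι 𝕜 E) {μ : ι → ℝ}
    (hb : ∀ i, (T + (t : 𝕜) • (rankOne 𝕜 x x - 1)) (b i) = (μ i : 𝕜) • b i) :
    ∑ i, Real.exp (μ i) ≤ Real.exp (RCLike.re ⟪x, T x⟫_𝕜 + (3 * ‖T‖) ^ 2 / (2 * t)) *
      (1 + (Fintype.card ι - 1) * Real.exp (-(t / 2))) := by
  have hp : ∑ i, ‖⟪x, b i⟫_𝕜‖ ^ 2 = 1 := by rw [b.sum_sq_norm_inner_left, hx, one_pow]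
  calc ∑ i, Real.exp (μ i)
      ≤ ∑ i, Real.exp (RCLike.re ⟪x, T x⟫_𝕜 + (3 * ‖T‖) ^ 2 / (2 * t)) *
          (‖⟪x, b i⟫_𝕜‖ ^ 2 + (1 - ‖⟪x, b i⟫_𝕜‖ ^ 2) * Real.exp (-(t / 2))) := by
        refine Finset.sum_le_sum fun i _ => exp_le_of_le_add_mul_sqrt_sub ht (by positivity) ?_
          (eigenvalue_le_re_inner_add_sqrt_sub T hx b hb i)
        exact pow_le_one₀ (norm_nonneg _) (by simpa [hx] using norm_inner_le_norm (𝕜 := 𝕜) x (b i))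
    _ = _ := by
        rw [← Finset.mul_sum, Finset.sum_add_distrib, ← Finset.sum_mul, Finset.sum_sub_distrib,
          hp, Finset.sum_const, Finset.card_univ, nsmul_one]

theorem tendsto_sum_exp_eigenvalues (T : E →L[𝕜] E) {x : E} (hx : ‖x‖ = 1)
    (b : ℝ → OrthonormalBasis ι 𝕜 E) (μ : ℝ → ι → ℝ)
    (hb : ∀ (t : ℝ) i, (T + (t : 𝕜) • (rankOne 𝕜 x x - 1)) (b t i) = (μ t i : 𝕜) • b t i) :
    Tendsto (fun t => ∑ i, Real.exp (μ t i)) atTop (𝓝 (Real.exp (RCLike.re ⟪x, T x⟫_𝕜))) := by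
  set c := RCLike.re ⟪x, T x⟫_𝕜
  have hx_self : ∀ t : ℝ, RCLike.re ⟪x, (T + (t : 𝕜) • (rankOne 𝕜 x x - 1)) x⟫_𝕜 = c := by
    intro t
    rw [re_inner_add_smul_rankOne_sub_one, inner_self_eq_norm_sq_to_K, hx]
    simp [c]
  have hupper : Tendsto (fun t : ℝ => Real.exp (c + (3 * ‖T‖) ^ 2 / (2 * t)) *
      (1 + (Fintype.card ι - 1) * Real.exp (-(t / 2)))) atTop (𝓝 (Real.exp c)) := by
    have h1 : Tendsto (fun t : ℝ => (3 * ‖T‖) ^ 2 / (2 * t)) atTop (𝓝 0) :=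
      tendsto_const_nhds.div_atTop (tendsto_id.const_mul_atTop two_pos)
    have h2 : Tendsto (fun t : ℝ => Real.exp (-(t / 2))) atTop (𝓝 0) :=
      Real.tendsto_exp_neg_atTop_nhds_zero.comp (tendsto_id.atTop_div_const two_pos)
    convert ((tendsto_const_nhds.add h1).rexp).mul
      (tendsto_const_nhds.add (tendsto_const_nhds.mul h2)) using 2
    simp
  refine tendsto_of_tendsto_of_tendsto_of_le_of_le' tendsto_const_nhds hupper
    (Eventually.of_forall fun t => ?_)
    ((eventually_gt_atTop 0).mono fun t ht => sum_exp_eigenvalues_le T hx ht (b t) (hb t))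
  simpa only [hx_self] using exp_re_inner_map_self_le_sum_exp (b t) (hb t) hx

end InnerProductSpace

section Matrix

theorem Matrix.IsHermitian.toEuclideanCLM_eigenvectorBasis {𝕜 n : Type*} [RCLike 𝕜] [Fintype n]
    [DecidableEq n] {M : Matrix n n 𝕜} (hM : M.IsHermitian) (i : n) :
    toEuclideanCLM (𝕜 := 𝕜) M (hM.eigenvectorBasis i) =
      (hM.eigenvalues i : 𝕜) • hM.eigenvectorBasis i := by
  apply WithLp.ofLp_injective
  rw [ofLp_toEuclideanCLM, hM.mulVec_eigenvectorBasis, WithLp.ofLp_smul]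
  exact RCLike.real_smul_eq_coe_smul _ _

variable {d : ℕ}

theorem trace_mexp {M : Matrix (Fin d) (Fin d) ℂ} (hM : M.IsHermitian) :
    (mexp M).trace = ∑ i, (Real.exp (hM.eigenvalues i) : ℂ) := by
  rw [mexp, mfun, dif_pos hM, trace_mul_cycle, Unitary.coe_star_mul_self, one_mul,
    trace_diagonal]

theorem isHermitian_add_smul_rankOneProj_sub_one {A : Matrix (Fin d) (Fin d) ℂ}
    (hA : A.IsHermitian) (x : Fin d → ℂ) (t : ℝ) :
    (A + (t : ℂ) • (rankOneProj x - 1)).IsHermitian := by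
  refine hA.add (IsHermitian.smul ?_ (Complex.conj_ofReal t))
  rw [IsHermitian, conjTranspose_sub, rankOneProj, conjTranspose_vecMulVec, star_star,
    conjTranspose_one]

theorem toEuclideanCLM_add_smul_rankOneProj_sub_one (A : Matrix (Fin d) (Fin d) ℂ)
    (x : Fin d → ℂ) (t : ℝ) :
    toEuclideanCLM (𝕜 := ℂ) (A + (t : ℂ) • (rankOneProj x - 1)) =
      toEuclideanCLM (𝕜 := ℂ) A +
        (t : ℂ) • (rankOne ℂ (WithLp.toLp 2 x) (WithLp.toLp 2 x) - 1) := by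
  have hP : toEuclideanCLM (𝕜 := ℂ) (rankOneProj x) =
      rankOne ℂ (WithLp.toLp 2 x) (WithLp.toLp 2 x) := by
    ext v i
    simp only [ofLp_toEuclideanCLM, rankOne_apply, PiLp.smul_apply, smul_eq_mul,
      EuclideanSpace.inner_eq_star_dotProduct, rankOneProj, mulVec, vecMulVec, dotProduct, of_apply,
      Finset.sum_mul]
    exact Finset.sum_congr rfl fun j _ => by ring
  rw [map_add, map_smul, map_sub, map_one, hP]

theorem norm_toLp_eq_one {x : Fin d → ℂ} (hx : star x ⬝ᵥ x = 1) : ‖WithLp.toLp 2 x‖ = 1 := by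
  have h : (‖WithLp.toLp 2 x‖ : ℂ) ^ 2 = 1 := by
    rw [← hx, dotProduct_comm]
    exact (inner_self_eq_norm_sq_to_K (𝕜 := ℂ) (WithLp.toLp 2 x)).symm
  exact (pow_eq_one_iff_of_nonneg (norm_nonneg _) two_ne_zero).1 (by exact_mod_cast h)

theorem Matrix.IsHermitian.qf_eq_re_inner {A : Matrix (Fin d) (Fin d) ℂ} (hA : A.IsHermitian)
    (x : Fin d → ℂ) :
    qf A x = (RCLike.re ⟪WithLp.toLp 2 x, toEuclideanCLM (𝕜 := ℂ) A (WithLp.toLp 2 x)⟫_ℂ : ℂ) := by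
  have h : qf A x = ⟪WithLp.toLp 2 x, toEuclideanCLM (𝕜 := ℂ) A (WithLp.toLp 2 x)⟫_ℂ :=
    dotProduct_comm _ _
  apply Complex.ext
  · simp [h]
  · simpa [qf] using hA.im_star_dotProduct_mulVec_self x

end Matrix

theorem trace_exp_tendsto_general {d : ℕ} (A : Matrix (Fin d) (Fin d) ℂ)
    (hA : A.IsHermitian) (x : Fin d → ℂ) (hx : star x ⬝ᵥ x = 1) :
    Tendsto (fun t : ℝ =>
        (mexp (A + (t : ℂ) • (rankOneProj x - 1))).trace)
      atTop (nhds (Complex.exp (qf A x))) := by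
  have hM := isHermitian_add_smul_rankOneProj_sub_one hA x
  have heigen (t : ℝ) (i : Fin d) :
      (toEuclideanCLM (𝕜 := ℂ) A + (t : ℂ) • (rankOne ℂ (WithLp.toLp 2 x) (WithLp.toLp 2 x) - 1))
        ((hM t).eigenvectorBasis i) = ((hM t).eigenvalues i : ℂ) • (hM t).eigenvectorBasis i := by
    rw [← toEuclideanCLM_add_smul_rankOneProj_sub_one]
    exact (hM t).toEuclideanCLM_eigenvectorBasis i
  have htrace (t : ℝ) : (mexp (A + (t : ℂ) • (rankOneProj x - 1))).trace =
      ((∑ i, Real.exp ((hM t).eigenvalues i) : ℝ) : ℂ) := by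
    rw [trace_mexp (hM t), Complex.ofReal_sum]
  simp only [htrace, hA.qf_eq_re_inner x, ← Complex.ofReal_exp]
  exact (Complex.continuous_ofReal.tendsto _).comp
    (tendsto_sum_exp_eigenvalues _ (norm_toLp_eq_one hx) (fun t => (hM t).eigenvectorBasis)
      (fun t => (hM t).eigenvalues) heigen)

/-- for Hermitian `A` and a unit vector `x` with `P = x ⊗ x`,
`tr (exp (A + t (P - I))) → exp ⟨Ax, x⟩` as `t → ∞`. -/
theorem trace_exp_tendsto {d : ℕ} (hd : 2 ≤ d) (A : Matrix (Fin d) (Fin d) ℂ)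
    (hA : A.IsHermitian) (x : Fin d → ℂ) (hx : star x ⬝ᵥ x = 1) :
    Tendsto (fun t : ℝ =>
        (mexp (A + (t : ℂ) • (rankOneProj x - 1))).trace)
      atTop (nhds (Complex.exp (qf A x))) :=
  trace_exp_tendsto_general A hA x hx
end

section
/- Let A be a Hermitian operator on a finite-dimensional complex Hilbert space and x a unit vector with P = x⊗x. Then there exists K > 0 such that for all t ≥ K, (⟨Ax,x⟩ − t^{−1/2})P + t(P − I) ≤ A ≤ (⟨Ax,x⟩ + t^{−1/2})P + (t/2)(I − P), where ≤ is the Löwner order on Hermitian operators. -/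
open Matrix Filter
open scoped ComplexOrder

/-! Write `P = x xᴴ` and decompose `v = c x + w` with `c = ⟨x, v⟩` and `w ⊥ x`. The form of
`A - ⟨Ax, x⟩ P` at `v` has no `|c|²` term, so it is bounded by `‖A‖ (2 |c| ‖w‖ + ‖w‖²)`,
whereas `s P + τ (1 - P)` has form `s |c|² + τ ‖w‖²`. For `s = t^{-1/2}` and `τ ≥ t / 2`, AM-GM
absorbs the cross term `2 ‖A‖ |c| ‖w‖` into `s |c|² + ‖A‖² √t ‖w‖²`, and `τ ‖w‖²` dominates the
rest once `t` is large. Taking `τ = t` gives the lower bound and `τ = t / 2` the upper one. -/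

open scoped Matrix.Norms.L2Operator

lemma mul_two_mul_add_sq_le_of_sq_le {M t : ℝ} (hM : 0 ≤ M) (ht : (2 * (M ^ 2 + M + 1)) ^ 2 ≤ t)
    (p r : ℝ) : M * (2 * p * r + r ^ 2) ≤ (√t)⁻¹ * p ^ 2 + t / 2 * r ^ 2 := by
  set u := √t
  have hu : 2 * (M ^ 2 + M + 1) ≤ u := Real.le_sqrt_of_sq_le ht
  have hu0 : 0 < u := lt_of_lt_of_le (by positivity) hu
  have htu : t = u ^ 2 := (Real.sq_sqrt (le_trans (by positivity) ht)).symm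
  have amgm : 2 * M * p * r ≤ u⁻¹ * p ^ 2 + M ^ 2 * u * r ^ 2 := by
    have h := mul_nonneg (inv_nonneg.2 hu0.le) (sq_nonneg (p - M * u * r))
    have hinv : u⁻¹ * u = 1 := inv_mul_cancel₀ hu0.ne'
    nlinarith
  have hlarge : M ^ 2 * u + M ≤ u ^ 2 / 2 := by nlinarith
  calc M * (2 * p * r + r ^ 2) = 2 * M * p * r + M * r ^ 2 := by ring
    _ ≤ u⁻¹ * p ^ 2 + (M ^ 2 * u + M) * r ^ 2 := by linarith
    _ ≤ u⁻¹ * p ^ 2 + t / 2 * r ^ 2 := by rw [htu]; gcongr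

namespace Matrix

variable {𝕜 n : Type*} [RCLike 𝕜] [Fintype n] {x : n → 𝕜}

lemma star_dotProduct_self_eq_norm_sq (v : n → 𝕜) :
    star v ⬝ᵥ v = (‖WithLp.toLp 2 v‖ : 𝕜) ^ 2 := by
  rw [← inner_self_eq_norm_sq_to_K, EuclideanSpace.inner_toLp_toLp, dotProduct_comm]

lemma norm_star_dotProduct_mulVec_le [DecidableEq n] {m : Type*} [Fintype m]
    (A : Matrix m n 𝕜) (u : m → 𝕜) (v : n → 𝕜) :
    ‖star u ⬝ᵥ A *ᵥ v‖ ≤ ‖A‖ * ‖WithLp.toLp 2 u‖ * ‖WithLp.toLp 2 v‖ := by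
  have h : star u ⬝ᵥ A *ᵥ v = inner 𝕜 (WithLp.toLp 2 u) (WithLp.toLp 2 (A *ᵥ v)) :=
    dotProduct_comm _ _
  rw [h, mul_assoc, mul_left_comm]
  exact (norm_inner_le_norm _ _).trans
    (mul_le_mul_of_nonneg_left (A.l2_opNorm_mulVec (WithLp.toLp 2 v)) (norm_nonneg _))

lemma PosSemidef.of_re_dotProduct_mulVec_nonneg {H : Matrix n n 𝕜} (hH : H.IsHermitian)
    (h : ∀ v, 0 ≤ RCLike.re (star v ⬝ᵥ H *ᵥ v)) : H.PosSemidef :=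
  .of_dotProduct_mulVec_nonneg hH fun v =>
    RCLike.nonneg_iff.2 ⟨h v, hH.im_star_dotProduct_mulVec_self v⟩

lemma posSemidef_add_and_sub_of_norm_le {B C : Matrix n n 𝕜} (hB : B.IsHermitian)
    (hC : C.IsHermitian) (h : ∀ v, ‖star v ⬝ᵥ B *ᵥ v‖ ≤ RCLike.re (star v ⬝ᵥ C *ᵥ v)) :
    (C + B).PosSemidef ∧ (C - B).PosSemidef := by
  have habs (v : n → 𝕜) := (RCLike.abs_re_le_norm (star v ⬝ᵥ B *ᵥ v)).trans (h v)
  refine ⟨.of_re_dotProduct_mulVec_nonneg (hC.add hB) fun v => ?_,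
    .of_re_dotProduct_mulVec_nonneg (hC.sub hB) fun v => ?_⟩
  · rw [add_mulVec, dotProduct_add, map_add]
    linarith [neg_abs_le (RCLike.re (star v ⬝ᵥ B *ᵥ v)), habs v]
  · rw [sub_mulVec, dotProduct_sub, map_sub]
    linarith [le_abs_self (RCLike.re (star v ⬝ᵥ B *ᵥ v)), habs v]

lemma vecMulVec_star_mulVec (x v : n → 𝕜) :
    vecMulVec x (star x) *ᵥ v = (star x ⬝ᵥ v) • x := by
  rw [vecMulVec_mulVec, op_smul_eq_smul]

lemma star_dotProduct_vecMulVec_star_mulVec (x v : n → 𝕜) :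
    star v ⬝ᵥ vecMulVec x (star x) *ᵥ v = (‖star x ⬝ᵥ v‖ : 𝕜) ^ 2 := by
  rw [vecMulVec_star_mulVec, dotProduct_smul, smul_eq_mul, star_dotProduct v x, RCLike.star_def,
    RCLike.mul_conj]

lemma star_dotProduct_sub_smul_eq_zero (hx : star x ⬝ᵥ x = 1) (v : n → 𝕜) :
    star x ⬝ᵥ (v - (star x ⬝ᵥ v) • x) = 0 := by
  rw [dotProduct_sub, dotProduct_smul, hx, smul_eq_mul, mul_one, sub_self]

lemma star_dotProduct_one_sub_vecMulVec_star_mulVec [DecidableEq n] (hx : star x ⬝ᵥ x = 1)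
    (v : n → 𝕜) :
    star v ⬝ᵥ (1 - vecMulVec x (star x)) *ᵥ v =
      (‖WithLp.toLp 2 (v - (star x ⬝ᵥ v) • x)‖ : 𝕜) ^ 2 := by
  set w := v - (star x ⬝ᵥ v) • x
  have hw : star x ⬝ᵥ w = 0 := star_dotProduct_sub_smul_eq_zero hx v
  have hv : v = (star x ⬝ᵥ v) • x + w := (add_sub_cancel _ _).symm
  have hPw : (1 - vecMulVec x (star x)) *ᵥ v = w := by
    rw [sub_mulVec, one_mulVec, vecMulVec_star_mulVec]
  rw [hPw, ← star_dotProduct_self_eq_norm_sq]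
  nth_rewrite 1 [hv]
  rw [star_add, add_dotProduct, star_smul, smul_dotProduct, hw, smul_zero, zero_add]

lemma re_star_dotProduct_smul_vecMulVec_add_smul_one_sub_mulVec [DecidableEq n]
    (hx : star x ⬝ᵥ x = 1) (s τ : ℝ) (v : n → 𝕜) :
    RCLike.re (star v ⬝ᵥ ((s : 𝕜) • vecMulVec x (star x) +
        (τ : 𝕜) • (1 - vecMulVec x (star x))) *ᵥ v) =
      s * ‖star x ⬝ᵥ v‖ ^ 2 + τ * ‖WithLp.toLp 2 (v - (star x ⬝ᵥ v) • x)‖ ^ 2 := by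
  rw [add_mulVec, smul_mulVec, smul_mulVec, dotProduct_add, dotProduct_smul, dotProduct_smul,
    star_dotProduct_vecMulVec_star_mulVec, star_dotProduct_one_sub_vecMulVec_star_mulVec hx,
    smul_eq_mul, smul_eq_mul]
  norm_cast

lemma star_dotProduct_sub_smul_vecMulVec_star_mulVec_smul_add (A : Matrix n n 𝕜)
    (hx : star x ⬝ᵥ x = 1) {w : n → 𝕜} (hw : star x ⬝ᵥ w = 0) (c : 𝕜) :
    star (c • x + w) ⬝ᵥ (A - (star x ⬝ᵥ A *ᵥ x) • vecMulVec x (star x)) *ᵥ (c • x + w) =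
      star c * (star x ⬝ᵥ A *ᵥ w) + c * (star w ⬝ᵥ A *ᵥ x) + star w ⬝ᵥ A *ᵥ w := by
  have hP : vecMulVec x (star x) *ᵥ (c • x + w) = c • x := by
    rw [vecMulVec_star_mulVec, dotProduct_add, dotProduct_smul, hx, hw, smul_eq_mul, mul_one,
      add_zero]
  have hwx : star w ⬝ᵥ x = 0 := by rw [star_dotProduct, hw, star_zero]
  rw [sub_mulVec, smul_mulVec, hP]
  simp only [mulVec_add, mulVec_smul, star_add, star_smul, dotProduct_add, add_dotProduct,
    dotProduct_sub, dotProduct_smul, smul_dotProduct, smul_eq_mul, hx, hwx]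
  ring

lemma norm_star_dotProduct_sub_smul_vecMulVec_star_mulVec_le [DecidableEq n] (A : Matrix n n 𝕜)
    (hx : star x ⬝ᵥ x = 1) (v : n → 𝕜) :
    ‖star v ⬝ᵥ (A - (star x ⬝ᵥ A *ᵥ x) • vecMulVec x (star x)) *ᵥ v‖ ≤
      ‖A‖ * (2 * ‖star x ⬝ᵥ v‖ * ‖WithLp.toLp 2 (v - (star x ⬝ᵥ v) • x)‖ +
        ‖WithLp.toLp 2 (v - (star x ⬝ᵥ v) • x)‖ ^ 2) := by
  set c := star x ⬝ᵥ v
  set w := v - c • x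
  have hv : v = c • x + w := (add_sub_cancel _ _).symm
  have hx1 : ‖WithLp.toLp 2 x‖ = 1 := by
    have h := star_dotProduct_self_eq_norm_sq x
    rw [hx, eq_comm] at h
    exact (pow_eq_one_iff_of_nonneg (norm_nonneg _) two_ne_zero).1 (by exact_mod_cast h)
  have hxw := norm_star_dotProduct_mulVec_le A x w
  have hwx := norm_star_dotProduct_mulVec_le A w x
  have hww := norm_star_dotProduct_mulVec_le A w w
  rw [hx1] at hxw hwx
  rw [hv, star_dotProduct_sub_smul_vecMulVec_star_mulVec_smul_add A hx
    (star_dotProduct_sub_smul_eq_zero hx v)]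
  calc _ ≤ ‖star c‖ * ‖star x ⬝ᵥ A *ᵥ w‖ + ‖c‖ * ‖star w ⬝ᵥ A *ᵥ x‖ + ‖star w ⬝ᵥ A *ᵥ w‖ := by
        grw [norm_add₃_le, norm_mul, norm_mul]
    _ ≤ _ := by
      rw [norm_star]
      nlinarith [norm_nonneg c, norm_nonneg A, norm_nonneg (WithLp.toLp 2 w)]

lemma norm_star_dotProduct_sub_smul_vecMulVec_star_mulVec_le_re [DecidableEq n]
    (A : Matrix n n 𝕜) (hx : star x ⬝ᵥ x = 1) {t τ : ℝ}
    (ht : (2 * (‖A‖ ^ 2 + ‖A‖ + 1)) ^ 2 ≤ t) (hτ : t / 2 ≤ τ) (v : n → 𝕜) :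
    ‖star v ⬝ᵥ (A - (star x ⬝ᵥ A *ᵥ x) • vecMulVec x (star x)) *ᵥ v‖ ≤
      RCLike.re (star v ⬝ᵥ ((((√t)⁻¹ : ℝ) : 𝕜) • vecMulVec x (star x) +
        (τ : 𝕜) • (1 - vecMulVec x (star x))) *ᵥ v) := by
  rw [re_star_dotProduct_smul_vecMulVec_add_smul_one_sub_mulVec hx]
  refine (norm_star_dotProduct_sub_smul_vecMulVec_star_mulVec_le A hx v).trans ?_
  grw [mul_two_mul_add_sq_le_of_sq_le (norm_nonneg A) ht, hτ]

theorem IsHermitian.loewner_sandwich_of_sq_le [DecidableEq n] {A : Matrix n n 𝕜}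
    (hA : A.IsHermitian) (hx : star x ⬝ᵥ x = 1) {t : ℝ}
    (ht : (2 * (‖A‖ ^ 2 + ‖A‖ + 1)) ^ 2 ≤ t) :
    (A - ((star x ⬝ᵥ A *ᵥ x - ((√t)⁻¹ : ℝ)) • vecMulVec x (star x) +
      (t : 𝕜) • (vecMulVec x (star x) - 1))).PosSemidef ∧
    ((star x ⬝ᵥ A *ᵥ x + ((√t)⁻¹ : ℝ)) • vecMulVec x (star x) +
      ((t / 2 : ℝ) : 𝕜) • (1 - vecMulVec x (star x)) - A).PosSemidef := by
  have hP : (vecMulVec x (star x)).IsHermitian := (posSemidef_vecMulVec_self_star x).isHermitian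
  have ha : IsSelfAdjoint (star x ⬝ᵥ A *ᵥ x) :=
    RCLike.conj_eq_iff_im.2 (hA.im_star_dotProduct_mulVec_self x)
  have hB := hA.sub (hP.smul ha)
  have hC (τ : ℝ) : ((((√t)⁻¹ : ℝ) : 𝕜) • vecMulVec x (star x) +
      (τ : 𝕜) • (1 - vecMulVec x (star x))).IsHermitian :=
    (hP.smul (RCLike.conj_ofReal _)).add ((isHermitian_one.sub hP).smul (RCLike.conj_ofReal _))
  have ht0 : 0 ≤ t := le_trans (by positivity) ht
  have lower := (posSemidef_add_and_sub_of_norm_le hB (hC t)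
    (norm_star_dotProduct_sub_smul_vecMulVec_star_mulVec_le_re A hx ht (by linarith))).1
  have upper := (posSemidef_add_and_sub_of_norm_le hB (hC (t / 2))
    (norm_star_dotProduct_sub_smul_vecMulVec_star_mulVec_le_re A hx ht le_rfl)).2
  constructor
  · convert lower using 1; module
  · convert upper using 1; module

end Matrix

theorem loewner_sandwich_general {d : ℕ} (A : Matrix (Fin d) (Fin d) ℂ)
    (hA : A.IsHermitian) (x : Fin d → ℂ) (hx : star x ⬝ᵥ x = 1) :
    ∃ K : ℝ, 0 < K ∧ ∀ t : ℝ, K ≤ t →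
      loewnerLE ((qf A x - ((Real.sqrt t)⁻¹ : ℝ)) • rankOneProj x
          + (t : ℂ) • (rankOneProj x - 1)) A ∧
      loewnerLE A ((qf A x + ((Real.sqrt t)⁻¹ : ℝ)) • rankOneProj x
          + ((t / 2 : ℝ) : ℂ) • (1 - rankOneProj x)) :=
  ⟨(2 * (‖A‖ ^ 2 + ‖A‖ + 1)) ^ 2, by positivity, fun _ ht => hA.loewner_sandwich_of_sq_le hx ht⟩

/-- the two-sided Löwner estimate
`(⟨Ax,x⟩ − t^{−1/2})P + t(P − I) ≤ A ≤ (⟨Ax,x⟩ + t^{−1/2})P + (t/2)(I − P)` for large `t`. -/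
theorem loewner_sandwich {d : ℕ} (hd : 2 ≤ d) (A : Matrix (Fin d) (Fin d) ℂ)
    (hA : A.IsHermitian) (x : Fin d → ℂ) (hx : star x ⬝ᵥ x = 1) :
    ∃ K : ℝ, 0 < K ∧ ∀ t : ℝ, K ≤ t →
      loewnerLE ((qf A x - ((Real.sqrt t)⁻¹ : ℝ)) • rankOneProj x
          + (t : ℂ) • (rankOneProj x - 1)) A ∧
      loewnerLE A ((qf A x + ((Real.sqrt t)⁻¹ : ℝ)) • rankOneProj x
          + ((t / 2 : ℝ) : ℂ) • (1 - rankOneProj x)) :=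
  loewner_sandwich_general A hA x hx
end

section
/- If S and T are Hermitian operators on a finite-dimensional complex Hilbert space with S ≤ T in the Löwner order, then tr(exp S) ≤ tr(exp T). -/
open Matrix Filter
open scoped ComplexOrder

/-!
Adding `c • 1` to a Hermitian matrix multiplies the trace of its exponential by `exp c`, so we may
assume `0 ≤ S ≤ T`. Then `tr (exp S) = ∑ tr (S ^ k) / k!`, and `tr (S ^ k) ≤ tr (T ^ k)` termwise:
along `M t = S + t • (T - S)`, which stays positive for `t ≥ 0`, the derivative of `tr (M t ^ k)`
is a sum of traces `tr (M t ^ j * (T - S))` of products of positive matrices, hence nonnegative.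
-/

open NormedSpace
open scoped Nat MatrixOrder Matrix.Norms.L2Operator

lemma mfun_eq_cfc {d : ℕ} (f : ℝ → ℝ) {A : Matrix (Fin d) (Fin d) ℂ} (hA : A.IsHermitian) :
    mfun f A = cfc f A := by
  rw [mfun, dif_pos hA, hA.cfc_eq, IsHermitian.cfc, Unitary.conjStarAlgAut_apply]
  rfl

lemma mexp_eq_exp {d : ℕ} {A : Matrix (Fin d) (Fin d) ℂ} (hA : A.IsHermitian) :
    mexp A = exp A :=
  (mfun_eq_cfc _ hA).trans (CFC.real_exp_eq_normedSpace_exp hA.isSelfAdjoint)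

namespace Matrix

variable {n : Type*} [Fintype n]

noncomputable def reTraceCLM : Matrix n n ℂ →L[ℝ] ℝ :=
  LinearMap.toContinuousLinearMap (Complex.reLm ∘ₗ (traceLinearMap n ℂ ℂ).restrictScalars ℝ)

@[simp] lemma reTraceCLM_apply (A : Matrix n n ℂ) : reTraceCLM A = A.trace.re := rfl

variable [DecidableEq n]

lemma trace_mul_nonneg {𝕜 : Type*} [RCLike 𝕜] {A B : Matrix n n 𝕜} (hA : 0 ≤ A) (hB : 0 ≤ B) :
    0 ≤ (A * B).trace := by
  obtain ⟨C, rfl⟩ := CStarAlgebra.nonneg_iff_eq_star_mul_self.mp hA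
  rw [mul_assoc, trace_mul_comm]
  exact (hB.posSemidef.mul_mul_conjTranspose_same C).trace_nonneg

lemma re_trace_pow_le_re_trace_pow {A B : Matrix n n ℂ} (hA : 0 ≤ A) (hAB : A ≤ B) (k : ℕ) :
    (A ^ k).trace.re ≤ (B ^ k).trace.re := by
  set D := B - A
  have hD : 0 ≤ D := sub_nonneg.mpr hAB
  have hline (t : ℝ) : HasDerivAt (fun t : ℝ => A + t • D) D t := by
    simpa using ((hasDerivAt_id t).smul_const D).const_add A
  have hderiv (t : ℝ) : HasDerivAt (fun t : ℝ => ((A + t • D) ^ k).trace.re)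
      (∑ i ∈ Finset.range k, ((A + t • D) ^ (k.pred - i) * D * (A + t • D) ^ i).trace.re) t := by
    simpa [Function.comp_def] using
      reTraceCLM.hasFDerivAt.comp_hasDerivAt t ((hline t).fun_pow' k)
  have hmono : MonotoneOn (fun t : ℝ => ((A + t • D) ^ k).trace.re) (Set.Ici 0) := by
    refine monotoneOn_of_hasDerivWithinAt_nonneg (convex_Ici 0)
      (fun t _ => (hderiv t).continuousAt.continuousWithinAt)
      (fun t _ => (hderiv t).hasDerivWithinAt) fun t ht => Finset.sum_nonneg fun i _ => ?_
    rw [interior_Ici] at ht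
    have hM : 0 ≤ A + t • D := add_nonneg hA (smul_nonneg ht.le hD)
    rw [trace_mul_comm, ← mul_assoc, ← pow_add]
    exact (Complex.nonneg_iff.mp (trace_mul_nonneg (hM.posSemidef.pow _).nonneg hD)).1
  simpa [D] using hmono (Set.mem_Ici.mpr le_rfl) (Set.mem_Ici.mpr zero_le_one) zero_le_one

lemma hasSum_re_trace_exp (A : Matrix n n ℂ) :
    HasSum (fun k => (k ! : ℝ)⁻¹ * (A ^ k).trace.re) (exp A).trace.re := by
  simpa using (exp_series_hasSum_exp' (𝕂 := ℝ) A).mapL reTraceCLM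

lemma re_trace_exp_le_re_trace_exp {A B : Matrix n n ℂ} (hA : 0 ≤ A) (hAB : A ≤ B) :
    (exp A).trace.re ≤ (exp B).trace.re :=
  hasSum_le (fun k => mul_le_mul_of_nonneg_left (re_trace_pow_le_re_trace_pow hA hAB k)
    (by positivity)) (hasSum_re_trace_exp A) (hasSum_re_trace_exp B)

lemma re_trace_exp_add_algebraMap (A : Matrix n n ℂ) (c : ℝ) :
    (exp (A + algebraMap ℝ _ c)).trace.re = Real.exp c * (exp A).trace.re := by
  rw [Matrix.exp_add_of_commute _ _ (Algebra.commutes c A).symm, ← algebraMap_exp_comm,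
    ← Real.exp_eq_exp_ℝ, Algebra.algebraMap_eq_smul_one, mul_smul_one, trace_smul,
    Complex.smul_re, smul_eq_mul]

end Matrix

/-- if `S ≤ T` in the Löwner order (both Hermitian), then
`tr (exp S) ≤ tr (exp T)`. -/
theorem trace_exp_monotone {d : ℕ} (S T : Matrix (Fin d) (Fin d) ℂ)
    (hS : S.IsHermitian) (hT : T.IsHermitian) (hST : loewnerLE S T) :
    (mexp S).trace.re ≤ (mexp T).trace.re := by
  have hS_shift : 0 ≤ S + algebraMap ℝ _ ‖S‖ :=
    neg_le_iff_add_nonneg.mp hS.isSelfAdjoint.neg_algebraMap_norm_le_self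
  have key := Matrix.re_trace_exp_le_re_trace_exp hS_shift
    (add_le_add_left (show S ≤ T from hST) _)
  rw [Matrix.re_trace_exp_add_algebraMap, Matrix.re_trace_exp_add_algebraMap] at key
  rw [mexp_eq_exp hS, mexp_eq_exp hT]
  exact le_of_mul_le_mul_left key (Real.exp_pos _)
end

section
/- Let g : ℝ → ℝ be a monotone increasing function and S ≤ T Hermitian operators on a finite-dimensional complex Hilbert space. Then for each i, g(λ_i(S)) ≤ g(λ_i(T)), where λ_i denotes the i-th largest eigenvalue; consequently tr(g(S)) ≤ tr(g(T)). -/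
/-!
If `λ₁ ≥ ⋯ ≥ λₙ` are the eigenvalues of `S` and `μ₁ ≥ ⋯ ≥ μₙ` those of `T`, the span of the
eigenvectors of `S` for `λ₁, …, λᵢ` and the span of those of `T` for `μᵢ, …, μₙ` have dimensions
adding up to `n + 1`, so they share some `x ≠ 0`; for it
`λᵢ ‖x‖² ≤ re ⟪S x, x⟫ ≤ re ⟪T x, x⟫ ≤ μᵢ ‖x‖²`. Applying the monotone `g` and summing over `i`
gives the trace inequality, since `tr g(A) = ∑ᵢ g(λᵢ(A))`.
-/

open Matrix Filter
open scoped ComplexOrder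

/-- The eigenvalues of a Hermitian matrix listed in decreasing order (with
multiplicity): `eigDecr hA i` is the `i`-th largest eigenvalue. -/
noncomputable def eigDecr {d : ℕ} {A : Matrix (Fin d) (Fin d) ℂ}
    (hA : A.IsHermitian) : Fin d → ℝ :=
  fun i => (hA.eigenvalues ∘ Tuple.sort hA.eigenvalues) i.rev

open Module Submodule
open scoped InnerProductSpace

namespace OrthonormalBasis

variable {ι 𝕜 E : Type*} [RCLike 𝕜] [NormedAddCommGroup E] [InnerProductSpace 𝕜 E]
  [Fintype ι] (b : OrthonormalBasis ι 𝕜 E)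

theorem finrank_span_image (s : Finset ι) : finrank 𝕜 (span 𝕜 (b '' s)) = s.card := by
  rw [Set.image_eq_range, ← Fintype.card_coe]
  exact finrank_span_eq_card (b.orthonormal.linearIndependent.comp _ Subtype.val_injective)

theorem inner_eq_zero_of_mem_span_image {s : Set ι} {x : E} (hx : x ∈ span 𝕜 (b '' s))
    {i : ι} (hi : i ∉ s) : ⟪b i, x⟫_𝕜 = 0 := by
  refine mem_orthogonal_singleton_iff_inner_right.mp (span_le.mpr ?_ hx)
  rintro _ ⟨j, hj, rfl⟩
  exact mem_orthogonal_singleton_iff_inner_right.mpr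
    (b.orthonormal.inner_eq_zero (ne_of_mem_of_not_mem hj hi).symm)

end OrthonormalBasis

theorem Submodule.exists_mem_ne_zero_of_finrank_lt_add {K V : Type*} [DivisionRing K]
    [AddCommGroup V] [Module K V] [FiniteDimensional K V] {U W : Submodule K V}
    (h : finrank K V < finrank K U + finrank K W) : ∃ x ∈ U, x ∈ W ∧ x ≠ 0 := by
  by_contra! hUW
  exact h.not_ge (finrank_add_finrank_le_of_disjoint (disjoint_def.mpr hUW))

namespace LinearMap.IsSymmetric

variable {𝕜 E : Type*} [RCLike 𝕜] [NormedAddCommGroup E] [InnerProductSpace 𝕜 E]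
  [FiniteDimensional 𝕜 E] {n : ℕ}

theorem re_inner_apply_self_eq_sum {T : E →ₗ[𝕜] E} (hT : T.IsSymmetric) (hn : finrank 𝕜 E = n)
    (x : E) :
    RCLike.re ⟪T x, x⟫_𝕜 =
      ∑ i, hT.eigenvalues hn i * ‖⟪hT.eigenvectorBasis hn i, x⟫_𝕜‖ ^ 2 := by
  rw [← (hT.eigenvectorBasis hn).sum_inner_mul_inner, map_sum]
  refine Finset.sum_congr rfl fun i _ => ?_
  rw [hT, apply_eigenvectorBasis, inner_smul_right, ← inner_conj_symm, mul_assoc,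
    RCLike.conj_mul, ← RCLike.ofReal_pow, ← RCLike.ofReal_mul, RCLike.ofReal_re]

theorem mul_norm_sq_le_re_inner_of_mem_span {T : E →ₗ[𝕜] E} (hT : T.IsSymmetric)
    (hn : finrank 𝕜 E = n) {s : Set (Fin n)} {m : ℝ} (hm : ∀ i ∈ s, m ≤ hT.eigenvalues hn i)
    {x : E} (hx : x ∈ span 𝕜 (hT.eigenvectorBasis hn '' s)) :
    m * ‖x‖ ^ 2 ≤ RCLike.re ⟪T x, x⟫_𝕜 := by
  rw [re_inner_apply_self_eq_sum hT hn, ← (hT.eigenvectorBasis hn).sum_sq_norm_inner_right,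
    Finset.mul_sum]
  refine Finset.sum_le_sum fun i _ => ?_
  by_cases hi : i ∈ s
  · exact mul_le_mul_of_nonneg_right (hm i hi) (by positivity)
  · simp [OrthonormalBasis.inner_eq_zero_of_mem_span_image _ hx hi]

theorem re_inner_le_mul_norm_sq_of_mem_span {T : E →ₗ[𝕜] E} (hT : T.IsSymmetric)
    (hn : finrank 𝕜 E = n) {s : Set (Fin n)} {m : ℝ} (hm : ∀ i ∈ s, hT.eigenvalues hn i ≤ m)
    {x : E} (hx : x ∈ span 𝕜 (hT.eigenvectorBasis hn '' s)) :
    RCLike.re ⟪T x, x⟫_𝕜 ≤ m * ‖x‖ ^ 2 := by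
  rw [re_inner_apply_self_eq_sum hT hn, ← (hT.eigenvectorBasis hn).sum_sq_norm_inner_right,
    Finset.mul_sum]
  refine Finset.sum_le_sum fun i _ => ?_
  by_cases hi : i ∈ s
  · exact mul_le_mul_of_nonneg_right (hm i hi) (by positivity)
  · simp [OrthonormalBasis.inner_eq_zero_of_mem_span_image _ hx hi]

theorem eigenvalues_eq_comp_cast {T : E →ₗ[𝕜] E} (hT : T.IsSymmetric) {m : ℕ}
    (hm : finrank 𝕜 E = m) (hn : finrank 𝕜 E = n) :
    hT.eigenvalues hm = hT.eigenvalues hn ∘ Fin.cast (hm.symm.trans hn) := by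
  subst hm hn
  rfl

theorem eigenvalues_le_eigenvalues_of_le {S T : E →ₗ[𝕜] E} (hS : S.IsSymmetric)
    (hT : T.IsSymmetric) (hST : S ≤ T) (hn : finrank 𝕜 E = n) (i : Fin n) :
    hS.eigenvalues hn i ≤ hT.eigenvalues hn i := by
  obtain ⟨x, hxS, hxT, hx⟩ := exists_mem_ne_zero_of_finrank_lt_add
    (U := span 𝕜 (hS.eigenvectorBasis hn '' ↑(Finset.Iic i)))
    (W := span 𝕜 (hT.eigenvectorBasis hn '' ↑(Finset.Ici i))) (by
      rw [OrthonormalBasis.finrank_span_image, OrthonormalBasis.finrank_span_image, Fin.card_Iic,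
        Fin.card_Ici, hn]
      omega)
  have hSx := mul_norm_sq_le_re_inner_of_mem_span hS hn
    (fun k hk => hS.eigenvalues_antitone hn (Finset.mem_Iic.mp hk)) hxS
  have hTx := re_inner_le_mul_norm_sq_of_mem_span hT hn
    (fun k hk => hT.eigenvalues_antitone hn (Finset.mem_Ici.mp hk)) hxT
  have hSTx : RCLike.re ⟪S x, x⟫_𝕜 ≤ RCLike.re ⟪T x, x⟫_𝕜 := by
    have := hST.re_inner_nonneg_left x
    rwa [sub_apply, inner_sub_left, map_sub, sub_nonneg] at this
  exact le_of_mul_le_mul_right (hSx.trans (hSTx.trans hTx)) (pow_pos (norm_pos_iff.mpr hx) 2)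

end LinearMap.IsSymmetric

theorem Tuple.apply_sort_rev_eq_of_antitone {α : Type*} [LinearOrder α] {n : ℕ} {f g : Fin n → α}
    (hg : Antitone g) (σ : Equiv.Perm (Fin n)) (hf : f = g ∘ σ) (i : Fin n) :
    f (Tuple.sort f i.rev) = g i := by
  have hmono : Monotone (f ∘ Fin.revPerm.trans σ.symm) := by
    intro j k hjk
    simpa [hf] using hg (Fin.rev_le_rev.mpr hjk)
  simpa [hf] using congrFun (Tuple.comp_sort_eq_comp_iff_monotone.mpr hmono).symm i.rev

-- `hA.eigenvalues` is not sorted: Mathlib reindexes the sorted eigenvalues of `toEuclideanLin A`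
-- along an arbitrary equivalence `Fin (Fintype.card (Fin d)) ≃ Fin d`.
theorem eigDecr_eq_eigenvalues {d : ℕ} {A : Matrix (Fin d) (Fin d) ℂ} (hA : A.IsHermitian) :
    eigDecr hA =
      (isSymmetric_toEuclideanLin_iff.mpr hA).eigenvalues finrank_euclideanSpace_fin := by
  funext i
  refine Tuple.apply_sort_rev_eq_of_antitone
    ((isSymmetric_toEuclideanLin_iff.mpr hA).eigenvalues_antitone _)
    ((Fintype.equivOfCardEq (Fintype.card_fin _)).symm.trans (finCongr (Fintype.card_fin d)))
    ?_ i
  funext j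
  exact congrFun (LinearMap.IsSymmetric.eigenvalues_eq_comp_cast _ _ _) _

theorem re_trace_mfun {d : ℕ} (f : ℝ → ℝ) {A : Matrix (Fin d) (Fin d) ℂ} (hA : A.IsHermitian) :
    (mfun f A).trace.re = ∑ i, f (eigDecr hA i) := by
  rw [mfun, dif_pos hA, trace_mul_cycle, UnitaryGroup.star_mul_self, one_mul, trace_diagonal,
    Complex.re_sum]
  simp only [Complex.ofReal_re]
  exact ((Fin.revPerm.trans (Tuple.sort hA.eigenvalues)).sum_comp (f ∘ hA.eigenvalues)).symm

theorem eigDecr_le_eigDecr {d : ℕ} {S T : Matrix (Fin d) (Fin d) ℂ} (hS : S.IsHermitian)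
    (hT : T.IsHermitian) (hST : loewnerLE S T) (i : Fin d) : eigDecr hS i ≤ eigDecr hT i := by
  rw [eigDecr_eq_eigenvalues, eigDecr_eq_eigenvalues]
  refine LinearMap.IsSymmetric.eigenvalues_le_eigenvalues_of_le _ _ ?_ _ i
  rw [LinearMap.le_def, ← map_sub, isPositive_toEuclideanLin_iff]
  exact hST

/-- for monotone `g` and Hermitian `S ≤ T`, `g` of the `i`-th largest
eigenvalue of `S` is at most that of `T`, and `tr g(S) ≤ tr g(T)`. -/
theorem weyl_monotone_trace {d : ℕ} (g : ℝ → ℝ) (hg : Monotone g)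
    (S T : Matrix (Fin d) (Fin d) ℂ) (hS : S.IsHermitian) (hT : T.IsHermitian)
    (hST : loewnerLE S T) :
    (∀ i : Fin d, g (eigDecr hS i) ≤ g (eigDecr hT i)) ∧
      (mfun g S).trace.re ≤ (mfun g T).trace.re := by
  have hle i : g (eigDecr hS i) ≤ g (eigDecr hT i) := hg (eigDecr_le_eigDecr hS hT hST i)
  refine ⟨hle, ?_⟩
  rw [re_trace_mfun g hS, re_trace_mfun g hT]
  exact Finset.sum_le_sum fun i _ => hle i
end

section
/- Let f : [0,∞) → ℝ be strictly convex with f(1) = 0. Then for all s, t > 1, s·f(t) + f(s) < f(st). -/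
open Matrix Filter
open scoped ComplexOrder

/-- if `f` is strictly convex on `[0, ∞)` with `f(1) = 0`, then
`s f(t) + f(s) < f(st)` for all `s, t > 1`. -/
theorem strictConvex_superadditive (f : ℝ → ℝ)
    (hf : StrictConvexOn ℝ (Set.Ici 0) f) (hf1 : f 1 = 0) :
    ∀ s t : ℝ, 1 < s → 1 < t → s * f t + f s < f (s * t) := by
  intro s t hs ht
  have h1 : (1:ℝ) ∈ Set.Ici (0:ℝ) := by norm_num
  have hstm : s * t ∈ Set.Ici (0:ℝ) := by simp; nlinarith
  have hts : t < s * t := by nlinarith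
  have hss : s < s * t := by nlinarith
  have A := hf.secant_strict_mono_aux2 h1 hstm ht hts
  have B := hf.secant_strict_mono_aux3 h1 hstm hs hss
  rw [hf1] at A B
  have hC : (f t - 0) / (t - 1) < (f (s*t) - f s) / (s*t - s) := A.trans B
  rw [div_lt_div_iff₀ (by linarith) (by nlinarith)] at hC
  nlinarith [hC]
end

section
/- Let D be a positive semidefinite operator with tr D = 1 and H a Hermitian operator on a finite-dimensional complex Hilbert space, and let f : ℝ → ℝ be convex. Then tr(D f(H)) ≥ f(tr(D H)). -/
open Matrix Filter
open scoped ComplexOrder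

/-!
Diagonalise `H = U diag(λ) U*`. With the weights `wᵢ = ⟨uᵢ, D uᵢ⟩` of `D` on the eigenvectors
`uᵢ` of `H`, one has `tr (D g(H)) = ∑ wᵢ g(λᵢ)` for every `g`; the weights are nonnegative and sum to
`tr D = 1`. Taking `g = id` and `g = f`, the claim is the finite Jensen inequality
`f (∑ wᵢ λᵢ) ≤ ∑ wᵢ f(λᵢ)`.
-/

theorem Matrix.trace_mul_mul_diagonal_mul {n R : Type*} [Fintype n] [DecidableEq n]
    [CommSemiring R] (D U V : Matrix n n R) (v : n → R) :
    (D * (U * diagonal v * V)).trace = ∑ i, (V * D * U) i i * v i := by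
  rw [← Matrix.mul_assoc, Matrix.trace_mul_comm, ← Matrix.mul_assoc, ← Matrix.mul_assoc]
  simp only [trace, diag, mul_diagonal]

namespace Matrix.IsHermitian

section RCLike

variable {n 𝕜 : Type*} [Fintype n] [DecidableEq n] [RCLike 𝕜] {H : Matrix n n 𝕜}

noncomputable def eigenWeight (hH : H.IsHermitian) (D : Matrix n n 𝕜) (i : n) : ℝ :=
  RCLike.re ((star (hH.eigenvectorUnitary : Matrix n n 𝕜) * D * hH.eigenvectorUnitary) i i)

theorem eigenWeight_nonneg (hH : H.IsHermitian) {D : Matrix n n 𝕜} (hD : D.PosSemidef) (i : n) :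
    0 ≤ hH.eigenWeight D i :=
  RCLike.nonneg_iff.mp (hD.conjTranspose_mul_mul_same _).diag_nonneg |>.1

theorem sum_eigenWeight (hH : H.IsHermitian) (D : Matrix n n 𝕜) :
    ∑ i, hH.eigenWeight D i = RCLike.re D.trace := by
  have hconj : (star (hH.eigenvectorUnitary : Matrix n n 𝕜) * D * hH.eigenvectorUnitary).trace
      = D.trace := by
    rw [trace_mul_cycle, Unitary.mul_star_self_of_mem hH.eigenvectorUnitary.2, Matrix.one_mul]
  rw [← hconj, trace, map_sum]
  rfl

end RCLike

section Fin

variable {d : ℕ} {H : Matrix (Fin d) (Fin d) ℂ}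

theorem mfun_id (hH : H.IsHermitian) : mfun id H = H := by
  conv_rhs => rw [hH.spectral_theorem]
  rw [mfun, dif_pos hH, Unitary.conjStarAlgAut_apply]
  rfl

theorem re_trace_mul_mfun (hH : H.IsHermitian) (D : Matrix (Fin d) (Fin d) ℂ) (f : ℝ → ℝ) :
    (D * mfun f H).trace.re = ∑ i, hH.eigenWeight D i * f (hH.eigenvalues i) := by
  rw [mfun, dif_pos hH, trace_mul_mul_diagonal_mul, Complex.re_sum]
  simp [eigenWeight]

end Fin

end Matrix.IsHermitian

/-- trace Jensen inequality: for a density matrix `D`, a Hermitian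
`H` and a convex `f`, `tr (D f(H)) ≥ f (tr (D H))`. -/
theorem trace_jensen {d : ℕ} (D H : Matrix (Fin d) (Fin d) ℂ)
    (hD : D.PosSemidef) (hDtr : D.trace = 1) (hH : H.IsHermitian)
    (f : ℝ → ℝ) (hf : ConvexOn ℝ Set.univ f) :
    f ((D * H).trace.re) ≤ (D * mfun f H).trace.re := by
  have hmean : (D * H).trace.re = ∑ i, hH.eigenWeight D i * hH.eigenvalues i := by
    simpa [hH.mfun_id] using hH.re_trace_mul_mfun D id
  have hweights : ∑ i, hH.eigenWeight D i = 1 := by simp [hH.sum_eigenWeight, hDtr]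
  rw [hmean, hH.re_trace_mul_mfun]
  simpa only [smul_eq_mul] using hf.map_sum_le (fun i _ => hH.eigenWeight_nonneg hD i)
    hweights (fun i _ => Set.mem_univ (hH.eigenvalues i))
end
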